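/- arXiv:2510.11023 — 5 statements merged into one kernel-verified Lean document; each statement's English description precedes it below -/
import Mathlib

section
/- Let V be a real normed vector space and C_𝒢, C_ℱ > 1. For each n let 𝒢ₙ, ℱₙ : V^{n+1} → V satisfy ‖𝒢ₙ(V₀,…,Vₙ) − 𝒢ₙ(W₀,…,Wₙ)‖ ≤ C_𝒢 max_{0≤j≤n}‖Vⱼ − Wⱼ‖ and ‖ℱₙ(V₀,…,Vₙ) − ℱₙ(W₀,…,Wₙ)‖ ≤ C_ℱ max_{0≤j≤n}‖Vⱼ − Wⱼ‖. Let u, U : ℕ → V with U₀ = u₀ and U_{n+1} = ℱₙ(U₀,…,Uₙ), and let parareal iterates satisfy U^k₀ = u₀ and U^{k+1}_{n+1} = 𝒢ₙ(U^{k+1}₀,…,U^{k+1}ₙ) + ℱₙ(U^k₀,…,U^kₙ) − 𝒢ₙ(U^k₀,…,U^kₙ). Define the running maximal error E^kₙ := max_{0≤j≤n} ‖u_j − U^k_j‖ and the fine defect ε_ℱ := sup_{j≥0} ‖u_{j+1} − ℱⱼ(U₀,…,Uⱼ)‖ (assumed finite). Then for all k, n ≥ 0: E^{k+1}_{n+1}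 ≤ (1 + C_ℱ)·ε_ℱ + (C_ℱ + C_𝒢)·E^kₙ + C_𝒢·E^{k+1}ₙ. -/
/-!
Write `E^k_n` for the running maximal error. Subtracting the parareal update from `u_{n+1}` splits
the new error into the fine defect `u_{n+1} - ℱₙ(U)`, the fine increment `ℱₙ(U) - ℱₙ(Uᵏ)` and the
coarse increment `𝒢ₙ(Uᵏ) - 𝒢ₙ(Uᵏ⁺¹)`. By the Lipschitz bounds and the triangle inequality through
`u` these are at most `ε_ℱ`, `C_ℱ (ε_ℱ + E^k_n)` and `C_𝒢 (E^k_n + E^{k+1}_n)`, since the fine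
solution `U` itself stays within `ε_ℱ` of `u`. The earlier indices are absorbed by `C_𝒢 E^{k+1}_n`
because `C_𝒢 ≥ 1`.
-/

open Finset

section RunningMaxDist

variable {E : Type*} [SeminormedAddCommGroup E]

def runningMaxDist (x y : ℕ → E) (n : ℕ) : ℝ :=
  (range (n + 1)).sup' (nonempty_range_iff.mpr (Nat.succ_ne_zero n)) fun j => ‖x j - y j‖

theorem norm_sub_le_runningMaxDist (x y : ℕ → E) {n j : ℕ} (hj : j ≤ n) :
    ‖x j - y j‖ ≤ runningMaxDist x y n :=
  le_sup' (fun j => ‖x j - y j‖) (mem_range_succ_iff.mpr hj)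

theorem runningMaxDist_nonneg (x y : ℕ → E) (n : ℕ) : 0 ≤ runningMaxDist x y n :=
  (norm_nonneg _).trans (norm_sub_le_runningMaxDist x y n.zero_le)

theorem runningMaxDist_le {x y : ℕ → E} {n : ℕ} {c : ℝ} (h : ∀ j ≤ n, ‖x j - y j‖ ≤ c) :
    runningMaxDist x y n ≤ c :=
  sup'_le _ _ fun j hj => h j (mem_range_succ_iff.mp hj)

theorem runningMaxDist_succ (x y : ℕ → E) (n : ℕ) :
    runningMaxDist x y (n + 1) = max (runningMaxDist x y n) ‖x (n + 1) - y (n + 1)‖ := by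
  simp only [runningMaxDist, range_add_one (n := n + 1)]
  rw [max_comm]
  exact sup'_insert _ _

theorem sup'_norm_sub_le_runningMaxDist_add (x y z : ℕ → E) (n : ℕ) :
    univ.sup' univ_nonempty (fun i : Fin (n + 1) => ‖y i - z i‖) ≤
      runningMaxDist x y n + runningMaxDist x z n :=
  sup'_le _ _ fun i _ =>
    calc ‖y i - z i‖ ≤ ‖x i - y i‖ + ‖x i - z i‖ := by
          rw [norm_sub_rev (x i)]; exact norm_sub_le_norm_sub_add_norm_sub _ _ _
      _ ≤ _ := add_le_add (norm_sub_le_runningMaxDist x y i.is_le)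
          (norm_sub_le_runningMaxDist x z i.is_le)

end RunningMaxDist

theorem norm_sub_parareal_update_le {E : Type*} [SeminormedAddCommGroup E] (a f f' g g' : E) :
    ‖a - (g' + f' - g)‖ ≤ ‖a - f‖ + ‖f - f'‖ + ‖g - g'‖ := by
  rw [show a - (g' + f' - g) = (a - f) + (f - f') + (g - g') by abel]
  exact norm_add₃_le

/-- The core recurrence inequality from the proof of the parareal convergence
theorem: with Lipschitz coarse and fine propagators (constants `CG, CF > 1`),
the running maximal parareal error `E^k_n = max_{0≤j≤n} ‖u_j − U^k_j‖`
satisfies `E^{k+1}_{n+1} ≤ (1+C_ℱ) ε_ℱ + (C_ℱ+C_𝒢) E^k_n + C_𝒢 E^{k+1}_n`,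
where `ε_ℱ = sup_{j≥0} ‖u_{j+1} − ℱ_j(U_{0:j})‖` is the (finite) fine defect. -/
theorem parareal_error_recurrence
    (V : Type*) [NormedAddCommGroup V]
    (CG CF : ℝ) (hCG : 1 < CG) (hCF : 1 < CF)
    (G F : (n : ℕ) → (Fin (n + 1) → V) → V)
    (hG : ∀ (n : ℕ) (v w : Fin (n + 1) → V),
      ‖G n v - G n w‖ ≤
        CG * Finset.univ.sup' Finset.univ_nonempty (fun j => ‖v j - w j‖))
    (hF : ∀ (n : ℕ) (v w : Fin (n + 1) → V),
      ‖F n v - F n w‖ ≤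
        CF * Finset.univ.sup' Finset.univ_nonempty (fun j => ‖v j - w j‖))
    (u U : ℕ → V)
    (hU0 : U 0 = u 0)
    (hUfine : ∀ n : ℕ, U (n + 1) = F n (fun j : Fin (n + 1) => U (j : ℕ)))
    (Up : ℕ → ℕ → V)
    (hPiter : ∀ k n : ℕ, Up (k + 1) (n + 1) =
      G n (fun j : Fin (n + 1) => Up (k + 1) (j : ℕ)) +
        F n (fun j : Fin (n + 1) => Up k (j : ℕ)) -
        G n (fun j : Fin (n + 1) => Up k (j : ℕ)))
    (hbdd : BddAbove (Set.range fun j : ℕ =>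
      ‖u (j + 1) - F j (fun i : Fin (j + 1) => U (i : ℕ))‖)) :
    ∀ k n : ℕ,
      (Finset.range (n + 2)).sup' (Finset.nonempty_range_iff.mpr (by omega))
          (fun j => ‖u j - Up (k + 1) j‖) ≤
        (1 + CF) * (⨆ j : ℕ, ‖u (j + 1) - F j (fun i : Fin (j + 1) => U (i : ℕ))‖) +
          (CF + CG) * (Finset.range (n + 1)).sup'
            (Finset.nonempty_range_iff.mpr (Nat.succ_ne_zero n))
            (fun j => ‖u j - Up k j‖) +
          CG * (Finset.range (n + 1)).sup'
            (Finset.nonempty_range_iff.mpr (Nat.succ_ne_zero n))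
            (fun j => ‖u j - Up (k + 1) j‖) := by
  intro k n
  set ε := ⨆ j : ℕ, ‖u (j + 1) - F j (fun i : Fin (j + 1) => U (i : ℕ))‖
  have hε0 : 0 ≤ ε := Real.iSup_nonneg fun j => norm_nonneg _
  have hdefect : ∀ j, ‖u (j + 1) - F j (fun i : Fin (j + 1) => U (i : ℕ))‖ ≤ ε :=
    le_ciSup hbdd
  have hfine : runningMaxDist u U n ≤ ε := runningMaxDist_le fun
    | 0, _ => by simpa [hU0] using hε0
    | j + 1, _ => hUfine j ▸ hdefect j
  have hEk := runningMaxDist_nonneg u (Up k) n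
  have hEk1 := runningMaxDist_nonneg u (Up (k + 1)) n
  change runningMaxDist u (Up (k + 1)) (n + 1) ≤
    (1 + CF) * ε + (CF + CG) * runningMaxDist u (Up k) n + CG * runningMaxDist u (Up (k + 1)) n
  rw [runningMaxDist_succ]
  refine max_le (by nlinarith) ?_
  rw [hPiter]
  calc _ ≤ _ := norm_sub_parareal_update_le _ _ _ _ _
    _ ≤ ε + CF * (ε + runningMaxDist u (Up k) n) +
          CG * (runningMaxDist u (Up k) n + runningMaxDist u (Up (k + 1)) n) := by
      gcongr
      · exact hdefect n
      · exact (hF n _ _).trans <| by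
          gcongr; exact (sup'_norm_sub_le_runningMaxDist_add u U (Up k) n).trans (by gcongr)
      · exact (hG n _ _).trans <| by
          gcongr; exact sup'_norm_sub_le_runningMaxDist_add u (Up k) (Up (k + 1)) n
    _ = _ := by ring
end

section
/- Let (E^kₙ)_{k,n∈ℕ} be a family of nonnegative real numbers and a, b, c > 0 such that E^{k+1}_{n+1} ≤ a + b·E^kₙ + c·E^{k+1}ₙ for all k, n ≥ 0 and E^k₀ = 0 for all k. Then for all k ≥ 1 and n ≥ 1, E^kₙ ≤ a·∑_{j=0}^{k−1} ∑_{i=0}^{n−j−1} binom(i+j, j)·c^i·b^j + (max_{0≤m≤n} E⁰ₘ)·b^k·∑_{j=k}^{n−1} binom(j−1, k−1)·c^{j−k}, where sums over empty index ranges are zero. -/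
/-!
For `b, c ≥ 0` the recurrence is monotone in its data, so by induction on `k` and then `n`,
`E` stays below the exact solution of the equality recurrence with zero left column and first
row `0, M, M, …`, where `M` is the maximum of `E 0` on `[0, n]` (the first entry uses `E 0 0 = 0`).
That solution is linear in the data, `a S + M bᵏ T`, with `S` and `T` the responses to a unit
source and to a unit first row. Both are sums of the partial sums `∑_{i<m} C(i+j, j) cⁱ` of the
negative binomial series, and Pascal's rule for these partial sums is exactly the recurrence.
-/

open Finset

namespace Parareal

section Solution

variable {R : Type*}

def gronwallSolution [Semiring R] (a b c : R) (g : ℕ → R) : ℕ → ℕ → R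
  | 0, n => g n
  | _ + 1, 0 => 0
  | k + 1, n + 1 =>
    a + b * gronwallSolution a b c g k n + c * gronwallSolution a b c g (k + 1) n

theorem le_gronwallSolution [Semiring R] [PartialOrder R] [IsOrderedRing R]
    {u : ℕ → ℕ → R} {a b c : R} {g : ℕ → R} {N : ℕ} (hb : 0 ≤ b) (hc : 0 ≤ c)
    (hrec : ∀ k n, u (k + 1) (n + 1) ≤ a + b * u k n + c * u (k + 1) n)
    (hcol : ∀ k, u (k + 1) 0 ≤ 0) (hrow : ∀ n ≤ N, u 0 n ≤ g n) :
    ∀ k, ∀ n ≤ N, u k n ≤ gronwallSolution a b c g k n := by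
  intro k
  induction k with
  | zero => intro n hn; rw [gronwallSolution]; exact hrow n hn
  | succ k ihk =>
    intro n
    induction n with
    | zero => intro _; exact hcol k
    | succ n ihn =>
      intro hn
      calc u (k + 1) (n + 1) ≤ a + b * u k n + c * u (k + 1) n := hrec k n
        _ ≤ a + b * gronwallSolution a b c g k n + c * gronwallSolution a b c g (k + 1) n := by
          gcongr
          exacts [ihk n (by omega), ihn (by omega)]

end Solution

section BinomialSums

variable {R : Type*} [CommSemiring R]

def negBinomPartialSum (c : R) (j m : ℕ) : R :=
  ∑ i ∈ range m, ((i + j).choose j : R) * c ^ i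

def gronwallSourceSum (b c : R) (k n : ℕ) : R :=
  ∑ j ∈ range k, ∑ i ∈ range (n - j), ((i + j).choose j : R) * c ^ i * b ^ j

-- Only meaningful for `1 ≤ k`: at `k = 0` the truncated `k - 1` makes every coefficient `1`.
def gronwallBoundarySum (c : R) (k n : ℕ) : R :=
  ∑ j ∈ Ico k n, ((j - 1).choose (k - 1) : R) * c ^ (j - k)

theorem negBinomPartialSum_zero_succ (c : R) (m : ℕ) :
    negBinomPartialSum c 0 (m + 1) = 1 + c * negBinomPartialSum c 0 m := by
  simp only [negBinomPartialSum, add_zero, Nat.choose_zero_right, Nat.cast_one, one_mul]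
  rw [sum_range_succ', mul_sum]
  simp only [pow_succ', pow_zero, add_comm]

theorem negBinomPartialSum_succ_succ (c : R) (j m : ℕ) :
    negBinomPartialSum c (j + 1) (m + 1) =
      negBinomPartialSum c j (m + 1) + c * negBinomPartialSum c (j + 1) m := by
  have tail : ∑ i ∈ range (m + 1), ((i + j).choose (j + 1) : R) * c ^ i =
      c * negBinomPartialSum c (j + 1) m := by
    rw [sum_range_succ', negBinomPartialSum, mul_sum]
    simp only [zero_add, Nat.choose_succ_self, Nat.cast_zero, zero_mul, add_zero]
    refine sum_congr rfl fun i _ => ?_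
    rw [add_right_comm, ← add_assoc, pow_succ]
    ring
  rw [negBinomPartialSum, ← tail, negBinomPartialSum, ← sum_add_distrib]
  refine sum_congr rfl fun i _ => ?_
  rw [← add_assoc, Nat.choose_succ_succ, Nat.cast_add, add_mul]

theorem negBinomPartialSum_succ_left (c : R) (j m : ℕ) :
    negBinomPartialSum c (j + 1) m =
      negBinomPartialSum c j m + c * negBinomPartialSum c (j + 1) (m - 1) := by
  cases m with
  | zero => simp [negBinomPartialSum]
  | succ m => exact negBinomPartialSum_succ_succ c j m

theorem gronwallSourceSum_eq (b c : R) (k n : ℕ) :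
    gronwallSourceSum b c k n = ∑ j ∈ range k, negBinomPartialSum c j (n - j) * b ^ j := by
  simp only [gronwallSourceSum, negBinomPartialSum, sum_mul]

theorem gronwallSourceSum_succ_succ (b c : R) (k n : ℕ) :
    gronwallSourceSum b c (k + 1) (n + 1) =
      1 + b * gronwallSourceSum b c k n + c * gronwallSourceSum b c (k + 1) n := by
  simp only [gronwallSourceSum_eq]
  rw [sum_range_succ', sum_range_succ' _ k]
  have shifted : ∀ j, negBinomPartialSum c (j + 1) (n + 1 - (j + 1)) * b ^ (j + 1) =
      b * (negBinomPartialSum c j (n - j) * b ^ j) +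
        c * (negBinomPartialSum c (j + 1) (n - (j + 1)) * b ^ (j + 1)) := fun j => by
    rw [Nat.add_sub_add_right, negBinomPartialSum_succ_left, Nat.sub_sub]
    ring
  simp only [shifted, sum_add_distrib, ← mul_sum, Nat.sub_zero, negBinomPartialSum_zero_succ]
  ring

theorem gronwallBoundarySum_succ_eq (c : R) (k n : ℕ) :
    gronwallBoundarySum c (k + 1) n = negBinomPartialSum c k (n - (k + 1)) := by
  rw [gronwallBoundarySum, sum_Ico_eq_sum_range, negBinomPartialSum]
  refine sum_congr rfl fun i _ => ?_
  rw [Nat.add_sub_cancel, Nat.add_sub_cancel_left, add_right_comm, Nat.add_sub_cancel, add_comm]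

theorem gronwallBoundarySum_one_succ (c : R) (n : ℕ) :
    gronwallBoundarySum c 1 (n + 1) = (if n = 0 then 0 else 1) + c * gronwallBoundarySum c 1 n := by
  simp only [gronwallBoundarySum_succ_eq, Nat.add_sub_cancel]
  cases n with
  | zero => simp [negBinomPartialSum]
  | succ n => simp [negBinomPartialSum_zero_succ]

theorem gronwallBoundarySum_succ_succ (c : R) (k n : ℕ) :
    gronwallBoundarySum c (k + 2) (n + 1) =
      gronwallBoundarySum c (k + 1) n + c * gronwallBoundarySum c (k + 2) n := by
  simp only [gronwallBoundarySum_succ_eq, Nat.add_sub_add_right]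
  exact negBinomPartialSum_succ_left c k (n - (k + 1))

theorem gronwallSolution_succ_eq (a b c M : R) (k n : ℕ) :
    gronwallSolution a b c (fun m => if m = 0 then 0 else M) (k + 1) n =
      a * gronwallSourceSum b c (k + 1) n + M * b ^ (k + 1) * gronwallBoundarySum c (k + 1) n := by
  induction k generalizing n with
  | zero =>
    induction n with
    | zero => simp [gronwallSolution, gronwallSourceSum, gronwallBoundarySum]
    | succ n ih =>
      rw [gronwallSolution, ih, gronwallSourceSum_succ_succ, gronwallBoundarySum_one_succ]
      simp only [gronwallSolution, gronwallSourceSum, range_zero, sum_empty]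
      split_ifs <;> ring
  | succ k ih =>
    induction n with
    | zero => simp [gronwallSolution, gronwallSourceSum, gronwallBoundarySum]
    | succ n ihn =>
      rw [gronwallSolution, ih, ihn, gronwallSourceSum_succ_succ, gronwallBoundarySum_succ_succ]
      ring

end BinomialSums

theorem discrete_gronwall_general
    (E : ℕ → ℕ → ℝ) (a b c : ℝ) (hb : 0 < b) (hc : 0 < c)
    (hrec : ∀ k n : ℕ, E (k + 1) (n + 1) ≤ a + b * E k n + c * E (k + 1) n)
    (hE0 : ∀ k : ℕ, E k 0 = 0) :
    ∀ k n : ℕ, 1 ≤ k → 1 ≤ n →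
      E k n ≤
        a * ∑ j ∈ Finset.range k, ∑ i ∈ Finset.range (n - j),
            (((i + j).choose j : ℕ) : ℝ) * c ^ i * b ^ j +
          ((Finset.range (n + 1)).sup' (Finset.nonempty_range_iff.mpr (Nat.succ_ne_zero n))
              (fun m => E 0 m)) * b ^ k *
            ∑ j ∈ Finset.Ico k n, (((j - 1).choose (k - 1) : ℕ) : ℝ) * c ^ (j - k) := by
  intro k n hk _
  obtain ⟨k, rfl⟩ := Nat.exists_eq_add_of_le' hk
  have hrow : ∀ m ≤ n, E 0 m ≤ if m = 0 then 0 else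
      (range (n + 1)).sup' (nonempty_range_iff.mpr (Nat.succ_ne_zero n)) (fun m => E 0 m) := by
    intro m hm
    split_ifs with hm0
    · subst hm0; exact (hE0 0).le
    · exact le_sup' (fun m => E 0 m) (mem_range.mpr (Nat.lt_succ_of_le hm))
  have := le_gronwallSolution hb.le hc.le hrec (fun k => (hE0 (k + 1)).le) hrow (k + 1) n le_rfl
  rwa [gronwallSolution_succ_eq] at this

/-- Discrete Gronwall-type lemma (Lemma 3.5): a doubly-indexed nonnegative
sequence satisfying `E^{k+1}_{n+1} ≤ a + b E^k_n + c E^{k+1}_n` with `E^k_0 = 0`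
is bounded explicitly by binomial sums in `b` and `c`. -/
theorem discrete_gronwall
    (E : ℕ → ℕ → ℝ) (a b c : ℝ) (ha : 0 < a) (hb : 0 < b) (hc : 0 < c)
    (hEnn : ∀ k n : ℕ, 0 ≤ E k n)
    (hrec : ∀ k n : ℕ, E (k + 1) (n + 1) ≤ a + b * E k n + c * E (k + 1) n)
    (hE0 : ∀ k : ℕ, E k 0 = 0) :
    ∀ k n : ℕ, 1 ≤ k → 1 ≤ n →
      E k n ≤
        a * ∑ j ∈ Finset.range k, ∑ i ∈ Finset.range (n - j),
            (((i + j).choose j : ℕ) : ℝ) * c ^ i * b ^ j +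
          ((Finset.range (n + 1)).sup' (Finset.nonempty_range_iff.mpr (Nat.succ_ne_zero n))
              (fun m => E 0 m)) * b ^ k *
            ∑ j ∈ Finset.Ico k n, (((j - 1).choose (k - 1) : ℕ) : ℝ) * c ^ (j - k) :=
  discrete_gronwall_general E a b c hb hc hrec hE0
end Parareal
end

section
/- Let b, c be real numbers and E₀ ∈ ℝ. Define f^kₙ for k, n ≥ 0 by f^k₀ = 0 for all k, f⁰ₙ = E₀ for all n ≥ 1, and for k ≥ 1, n ≥ 1: f^kₙ = E₀·b^k·∑_{j=k}^{n−1} binom(j−1, k−1)·c^{j−k} (an empty sum being zero). Then f satisfies the homogeneous recurrence f^{k+1}_{n+1} = b·f^kₙ + c·f^{k+1}ₙ for all k ≥ 0 and n ≥ 0. -/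
/-!
Shifting the index `j ↦ j + 1` turns the inner sum into `∑_{m < n-1} binom(m, k-1) c^{m-(k-1)}`.
For this sum Pascal's rule `binom(m+1, K+1) = binom(m, K) + binom(m, K+1)` splits the term of
`f^{k+1}_{n+1}` into the term of `f^k_n` and `c` times the term of `f^{k+1}_n`; for `k = 0` the sum
is geometric.
-/

open Finset

section BinomGeomSum

variable {R : Type*} [CommSemiring R]

def binomGeomSum (c : R) (K N : ℕ) : R :=
  ∑ m ∈ range N, (m.choose K : R) * c ^ (m - K)

theorem binomGeomSum_zero_succ (c : R) (N : ℕ) :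
    binomGeomSum c 0 (N + 1) = 1 + c * binomGeomSum c 0 N := by
  simp only [binomGeomSum, Nat.choose_zero_right, Nat.cast_one, one_mul, Nat.sub_zero]
  rw [geom_sum_succ, add_comm]

theorem binomGeomSum_succ_succ (c : R) (K N : ℕ) :
    binomGeomSum c (K + 1) (N + 1) = binomGeomSum c K N + c * binomGeomSum c (K + 1) N := by
  -- `c ^ (m - K) = c * c ^ (m - (K + 1))` fails only for `m ≤ K`, where `binom(m, K+1) = 0`.
  have shift : ∀ m : ℕ, (m.choose (K + 1) : R) * c ^ (m - K) =
      c * ((m.choose (K + 1) : R) * c ^ (m - (K + 1))) := by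
    intro m
    rcases lt_or_ge m (K + 1) with hm | hm
    · simp [Nat.choose_eq_zero_of_lt hm]
    · rw [show m - K = m - (K + 1) + 1 by omega, pow_succ]
      ring
  simp only [binomGeomSum, sum_range_succ' _ N, Nat.choose_succ_succ', Nat.cast_add, add_mul,
    sum_add_distrib, mul_sum, shift, Nat.choose_zero_succ, Nat.cast_zero, zero_mul, add_zero,
    Nat.add_sub_add_right]

theorem sum_Ico_choose_pred_eq_binomGeomSum (c : R) (K N : ℕ) :
    ∑ j ∈ Ico (K + 1) (N + 1), ((j - 1).choose K : R) * c ^ (j - (K + 1)) =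
      binomGeomSum c K N := by
  rw [← sum_Ico_add', binomGeomSum]
  simp only [Nat.add_sub_cancel, Nat.add_sub_add_right]
  refine sum_subset (fun m hm => by simp_all) fun m _ hm => ?_
  have hmK : m < K := by simp_all
  simp [Nat.choose_eq_zero_of_lt hmK]

end BinomGeomSum

/-- Explicit solution of the homogeneous two-index linear recurrence appearing
in the proof of the discrete Gronwall-type lemma: the function defined by
`f^k_0 = 0`, `f^0_n = E₀` for `n ≥ 1`, and
`f^k_n = E₀ b^k ∑_{j=k}^{n−1} binom(j−1,k−1) c^{j−k}` for `k, n ≥ 1`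
satisfies `f^{k+1}_{n+1} = b f^k_n + c f^{k+1}_n`. -/
theorem homogeneous_recurrence_solution
    (b c E₀ : ℝ) (f : ℕ → ℕ → ℝ)
    (hf0 : ∀ k : ℕ, f k 0 = 0)
    (hfE : ∀ n : ℕ, 1 ≤ n → f 0 n = E₀)
    (hfk : ∀ k n : ℕ, 1 ≤ k → 1 ≤ n →
      f k n = E₀ * b ^ k *
        ∑ j ∈ Finset.Ico k n, (((j - 1).choose (k - 1) : ℕ) : ℝ) * c ^ (j - k)) :
    ∀ k n : ℕ, f (k + 1) (n + 1) = b * f k n + c * f (k + 1) n := by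
  have hf : ∀ K N, f (K + 1) (N + 1) = E₀ * b ^ (K + 1) * binomGeomSum c K N := fun K N => by
    rw [hfk _ _ (by omega) (by omega), Nat.add_sub_cancel, sum_Ico_choose_pred_eq_binomGeomSum]
  rintro k (_ | N)
  · rw [hf0, hf0, hf, binomGeomSum, range_zero, sum_empty]
    ring
  rcases k with _ | K
  · rw [hf, hf, hfE _ N.succ_pos, binomGeomSum_zero_succ]
    ring
  · rw [hf, hf, hf, binomGeomSum_succ_succ]
    ring
end

section
/- Let a, b, c be real numbers. Define f^kₙ for k, n ≥ 0 by f^kₙ = a·∑_{j=0}^{k−1} ∑_{i=0}^{n−j−1} binom(i+j, j)·c^i·b^j, where sums over empty index ranges are zero (so f⁰ₙ = 0 and f^k₀ = 0). Then f satisfies the nonhomogeneous recurrence f^{k+1}_{n+1} = a + b·f^kₙ + c·f^{k+1}ₙ for all k ≥ 0 and n ≥ 0. -/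
/-!
Split the double sum into columns: column `j` collects the lattice points `(i, j)` with
`i + j < n`, weighted by `binom(i+j, j) c^i b^j`. Pascal's rule
`binom(i+j+2, j+1) = binom(i+j+1, j) + binom(i+j+1, j+1)` shows that column `j + 1` at level
`n + 1` is `b` times column `j` at level `n` plus `c` times column `j + 1` at level `n`, while
column `0` is a geometric sum satisfying `g (n + 1) = 1 + c g n`. Summing over the columns
`j ≤ k` gives the recurrence.
-/

open Finset

section

variable {R : Type*} [CommSemiring R]

def choosePowSum (c : R) (j m : ℕ) : R :=
  ∑ i ∈ range m, ((i + j).choose j : R) * c ^ i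

theorem choosePowSum_succ_succ (c : R) (j m : ℕ) :
    choosePowSum c (j + 1) (m + 1) =
      choosePowSum c j (m + 1) + c * choosePowSum c (j + 1) m := by
  have pascal (i : ℕ) : ((i + 1 + (j + 1)).choose (j + 1) : R) =
      ((i + 1 + j).choose j : R) + ((i + (j + 1)).choose (j + 1) : R) := by
    rw [show i + (j + 1) = i + 1 + j by omega, ← Nat.cast_add, ← Nat.choose_succ_succ']
    rfl
  simp only [choosePowSum, sum_range_succ' _ m, pascal, add_mul, sum_add_distrib, mul_sum]
  simp only [zero_add, Nat.choose_self, pow_zero, pow_succ]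
  rw [add_right_comm]
  congr 2
  ext i
  ring

def binomColumn (b c : R) (j n : ℕ) : R :=
  ∑ i ∈ range (n - j), ((i + j).choose j : R) * c ^ i * b ^ j

theorem binomColumn_eq (b c : R) (j n : ℕ) :
    binomColumn b c j n = choosePowSum c j (n - j) * b ^ j := by
  rw [binomColumn, choosePowSum, sum_mul]

theorem binomColumn_zero_succ (b c : R) (n : ℕ) :
    binomColumn b c 0 (n + 1) = 1 + c * binomColumn b c 0 n := by
  simp only [binomColumn_eq, choosePowSum, Nat.sub_zero, add_zero, Nat.choose_zero_right,
    Nat.cast_one, one_mul, pow_zero, mul_one, sum_range_succ', mul_sum, pow_succ]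
  rw [add_comm]
  congr 2
  ext i
  ring

theorem binomColumn_succ_succ (b c : R) (j n : ℕ) :
    binomColumn b c (j + 1) (n + 1) =
      b * binomColumn b c j n + c * binomColumn b c (j + 1) n := by
  simp only [binomColumn_eq, Nat.add_sub_add_right]
  rcases Nat.eq_zero_or_eq_succ_pred (n - j) with h | h
  · simp [h, choosePowSum, show n - (j + 1) = 0 by omega]
  · rw [h, show n - (j + 1) = (n - j).pred by omega, choosePowSum_succ_succ]
    ring

theorem sum_binomColumn_succ_succ (b c : R) (k n : ℕ) :
    ∑ j ∈ range (k + 1), binomColumn b c j (n + 1) =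
      1 + b * ∑ j ∈ range k, binomColumn b c j n +
        c * ∑ j ∈ range (k + 1), binomColumn b c j n := by
  simp only [sum_range_succ' _ k, binomColumn_succ_succ, binomColumn_zero_succ,
    sum_add_distrib, mul_sum, mul_add]
  ring

end

/-- Explicit solution of the nonhomogeneous two-index linear recurrence with
vanishing boundary data appearing in the proof of the discrete Gronwall-type
lemma: `f^k_n = a ∑_{j=0}^{k−1} ∑_{i=0}^{n−j−1} binom(i+j,j) c^i b^j`
satisfies `f^{k+1}_{n+1} = a + b f^k_n + c f^{k+1}_n`. -/
theorem nonhomogeneous_recurrence_solution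
    (a b c : ℝ) (f : ℕ → ℕ → ℝ)
    (hf : ∀ k n : ℕ, f k n =
      a * ∑ j ∈ Finset.range k, ∑ i ∈ Finset.range (n - j),
        (((i + j).choose j : ℕ) : ℝ) * c ^ i * b ^ j) :
    ∀ k n : ℕ, f (k + 1) (n + 1) = a + b * f k n + c * f (k + 1) n := by
  have hf_columns (k n : ℕ) : f k n = a * ∑ j ∈ range k, binomColumn b c j n := hf k n
  intro k n
  rw [hf_columns, hf_columns, hf_columns, sum_binomColumn_succ_succ]
  ring
end

section
/- Let b ≥ 0, c > 1 be real numbers and let k, n be integers with 1 ≤ k ≤ n. Then ∑_{j=0}^{k−1} ∑_{i=0}^{n−j−1} binom(i+j, j)·c^i·b^j ≤ (1/(c−1))·(c·(b+c)^{n−1} − (1+b)^{n−1}). -/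
/-!
Since `i + j ≤ n - 1`, each `binom(i+j, j)` is at most `binom(n-1, j)`. The inner sum then becomes
`binom(n-1, j) b^j` times a geometric sum in `c`, whose product with `c - 1` is `c^(n-j) - 1`;
by the binomial theorem the outer sum (extended to all `j ≤ n - 1`) collapses to
`c (b+c)^(n-1) - (1+b)^(n-1)`.
-/

open Finset

theorem sum_range_choose_add_mul_le {R : Type*} [CommSemiring R] [PartialOrder R]
    [IsOrderedRing R] {b c : R} (hb : 0 ≤ b) (hc : 0 ≤ c) (m j : ℕ) :
    ∑ i ∈ range (m + 1 - j), (((i + j).choose j : ℕ) : R) * c ^ i * b ^ j ≤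
      (m.choose j : R) * b ^ j * ∑ i ∈ range (m + 1 - j), c ^ i := by
  rw [mul_sum]
  refine sum_le_sum fun i hi => ?_
  have hchoose : (i + j).choose j ≤ m.choose j :=
    Nat.choose_le_choose j (by rw [mem_range] at hi; omega)
  calc (((i + j).choose j : ℕ) : R) * c ^ i * b ^ j
      ≤ (m.choose j : R) * c ^ i * b ^ j := by gcongr
    _ = (m.choose j : R) * b ^ j * c ^ i := by ring

theorem sum_choose_mul_geom_sum_mul_sub_one {R : Type*} [CommRing R] (b c : R) (m : ℕ) :
    (∑ j ∈ range (m + 1), (m.choose j : R) * b ^ j * ∑ i ∈ range (m + 1 - j), c ^ i) * (c - 1) =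
      c * (b + c) ^ m - (1 + b) ^ m := by
  -- `1 ^ (m - j)` makes the second sum the binomial expansion of `(b + 1) ^ m` on the nose.
  have hgeom : ∀ j ∈ range (m + 1),
      (m.choose j : R) * b ^ j * (∑ i ∈ range (m + 1 - j), c ^ i) * (c - 1) =
        c * (b ^ j * c ^ (m - j) * m.choose j) - b ^ j * 1 ^ (m - j) * m.choose j := by
    intro j hj
    rw [mul_assoc, geom_sum_mul, show m + 1 - j = m - j + 1 by rw [mem_range] at hj; omega]
    ring
  rw [sum_mul, sum_congr rfl hgeom, sum_sub_distrib, ← mul_sum, add_comm 1 b, add_pow, add_pow]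

theorem double_binomial_sum_estimate_general
    (b c : ℝ) (hb : 0 ≤ b) (hc : 1 < c) (k n : ℕ) (hkn : k ≤ n) :
    ∑ j ∈ Finset.range k, ∑ i ∈ Finset.range (n - j),
        (((i + j).choose j : ℕ) : ℝ) * c ^ i * b ^ j ≤
      (1 / (c - 1)) * (c * (b + c) ^ (n - 1) - (1 + b) ^ (n - 1)) := by
  have hc1 : 0 < c - 1 := sub_pos.mpr hc
  obtain _ | m := n
  · obtain rfl : k = 0 := Nat.le_zero.mp hkn
    simp only [range_zero, sum_empty, Nat.zero_sub, pow_zero, mul_one]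
    rw [one_div_mul_cancel hc1.ne']
    exact zero_le_one
  calc ∑ j ∈ range k, ∑ i ∈ range (m + 1 - j), (((i + j).choose j : ℕ) : ℝ) * c ^ i * b ^ j
      ≤ ∑ j ∈ range (m + 1), ∑ i ∈ range (m + 1 - j),
          (((i + j).choose j : ℕ) : ℝ) * c ^ i * b ^ j :=
        sum_le_sum_of_subset_of_nonneg (range_subset_range.mpr hkn)
          fun _ _ _ => sum_nonneg fun _ _ => by positivity
    _ ≤ ∑ j ∈ range (m + 1), (m.choose j : ℝ) * b ^ j * ∑ i ∈ range (m + 1 - j), c ^ i :=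
        sum_le_sum fun j _ => sum_range_choose_add_mul_le hb (by positivity) m j
    _ = 1 / (c - 1) * (c * (b + c) ^ (m + 1 - 1) - (1 + b) ^ (m + 1 - 1)) := by
        rw [Nat.add_sub_cancel, ← sum_choose_mul_geom_sum_mul_sub_one, one_div,
          mul_comm, mul_inv_cancel_right₀ hc1.ne']

/-- Estimate for the double binomial sum appearing in the discrete
Gronwall-type bound for the parareal error: for `b ≥ 0`, `c > 1` and
`1 ≤ k ≤ n`,
`∑_{j=0}^{k−1} ∑_{i=0}^{n−j−1} binom(i+j,j) c^i b^j
  ≤ (c (b+c)^{n−1} − (1+b)^{n−1})/(c−1)`. -/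
theorem double_binomial_sum_estimate
    (b c : ℝ) (hb : 0 ≤ b) (hc : 1 < c) (k n : ℕ) (hk : 1 ≤ k) (hkn : k ≤ n) :
    ∑ j ∈ Finset.range k, ∑ i ∈ Finset.range (n - j),
        (((i + j).choose j : ℕ) : ℝ) * c ^ i * b ^ j ≤
      (1 / (c - 1)) * (c * (b + c) ^ (n - 1) - (1 + b) ^ (n - 1)) :=
  double_binomial_sum_estimate_general b c hb hc k n hkn
end
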